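/- For every natural number n, the sum over all B-paths P of length n of t^{e(P)}, where e(P) is the number of down-steps of P whose endpoint has even second coordinate, equals the polynomial Σ_{j=0}^{⌊n/2⌋} C(⌊n/2⌋, j)·C(⌊(n+1)/2⌋, j)·t^j (an identity of polynomials in the indeterminate t). -/

import Mathlib

/-- A step of a lattice path: up-step (1,1), down-step (1,-1), or horizontal step (1,0). -/
inductive Step where
  | U : Step
  | D : Step
  | H : Step
deriving DecidableEq

instance instFintypeStep : Fintype Step :=
  ⟨{Step.U, Step.D, Step.H}, fun x => by cases x <;> simp⟩

/-- The change in the second coordinate produced by a step. -/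
def stepVal : Step → ℤ
  | .U => 1
  | .D => -1
  | .H => 0

/-- The height (second coordinate) reached after performing the steps of `l`, starting at 0. -/
def hgt (l : List Step) : ℤ := (l.map stepVal).sum

/-- `l` is a B-path: it returns to height 0, never goes below the x-axis, and all
horizontal steps occur at height 0 (stated with bounded quantifiers, which is equivalent). -/
def IsBPath (l : List Step) : Prop :=
  hgt l = 0 ∧ (∀ i < l.length + 1, 0 ≤ hgt (l.take i)) ∧
    ∀ i < l.length, l[i]? = some Step.H → hgt (l.take i) = 0

instance (l : List Step) : Decidable (IsBPath l) :=
  inferInstanceAs (Decidable (_ ∧ _ ∧ _))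

/-- `e l` is the number of down-steps of `l` whose endpoint has even second coordinate. -/
def e (l : List Step) : ℕ :=
  ((Finset.range l.length).filter
    (fun i => l[i]? = some Step.D ∧ Even (hgt (l.take (i + 1))))).card

/-!
Split the sum according to the final height: let `P n h` be the weighted sum over the prefixes of
length `n` that obey the B-path constraints and end at height `h`. Removing the last step gives
`P (n+1) h = P n (h-1) + w h * P n (h+1) + [h = 0] * P n h`, where `w h = t` for even `h` and
`w h = 1` for odd `h`. The closed form whose coefficient of `t^j` is
`C(⌊n/2⌋, j + h/2) * C(⌈n/2⌉, j)` for even `h` and `C(⌊n/2⌋, j) * C(⌈n/2⌉, j + (h+1)/2)` for odd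
`h` satisfies the same recursion by Pascal's rule and has the same initial values; at `h = 0`
it is the claimed polynomial.
-/

open Polynomial

def IsBPrefix (l : List Step) : Prop :=
  (∀ i < l.length + 1, 0 ≤ hgt (l.take i)) ∧
    ∀ i < l.length, l[i]? = some Step.H → hgt (l.take i) = 0

instance (l : List Step) : Decidable (IsBPrefix l) :=
  inferInstanceAs (Decidable (_ ∧ _))

theorem isBPath_iff (l : List Step) : IsBPath l ↔ IsBPrefix l ∧ hgt l = 0 :=
  and_comm

theorem hgt_append_singleton (l : List Step) (s : Step) :
    hgt (l ++ [s]) = hgt l + stepVal s := by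
  simp [hgt]

theorem IsBPrefix.hgt_nonneg {l : List Step} (hl : IsBPrefix l) : 0 ≤ hgt l := by
  simpa using hl.1 l.length (by omega)

theorem isBPrefix_append_singleton_iff (l : List Step) (s : Step) :
    IsBPrefix (l ++ [s]) ↔
      IsBPrefix l ∧ 0 ≤ hgt l + stepVal s ∧ (s = Step.H → hgt l = 0) := by
  simp +contextual only [IsBPrefix, List.length_append, List.length_singleton,
    Nat.forall_lt_succ_right, List.take_append_of_le_length, Nat.le_of_lt, le_refl,
    List.getElem?_append_left, List.getElem?_concat_length, List.take_of_length_le,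
    hgt_append_singleton, Option.some.injEq]
  tauto

theorem e_append_singleton (l : List Step) (s : Step) :
    e (l ++ [s]) = e l + if s = Step.D ∧ Even (hgt l + stepVal s) then 1 else 0 := by
  simp only [e, Finset.card_filter, List.length_append, List.length_singleton,
    Finset.sum_range_succ]
  congr 1
  · refine Finset.sum_congr rfl fun i hi => ?_
    rw [Finset.mem_range] at hi
    rw [List.getElem?_append_left hi, List.take_append_of_le_length hi]
  · simp [List.take_of_length_le, hgt_append_singleton]

noncomputable def prefixWeight (h : ℤ) (l : List Step) : ℤ[X] :=
  if IsBPrefix l ∧ hgt l = h then X ^ e l else 0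

noncomputable def prefixPoly (n : ℕ) (h : ℤ) : ℤ[X] :=
  ∑ g : Fin n → Step, prefixWeight h (List.ofFn g)

noncomputable def stepFactor : Step → ℤ → ℤ[X]
  | .U, _ => 1
  | .D, h => if Even h then X else 1
  | .H, h => if h = 0 then 1 else 0

theorem prefixWeight_append_singleton {h : ℤ} (hh : 0 ≤ h) (l : List Step) (s : Step) :
    prefixWeight h (l ++ [s]) = stepFactor s h * prefixWeight (h - stepVal s) l := by
  unfold prefixWeight
  by_cases hl : IsBPrefix l ∧ hgt l = h - stepVal s
  · simp only [if_pos hl, isBPrefix_append_singleton_iff, hgt_append_singleton,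
      e_append_singleton, pow_add]
    obtain ⟨hl, hlh⟩ := hl
    simp only [show hgt l + stepVal s = h by omega, hl, hh, true_and, and_true]
    cases s
    · simp [stepFactor]
    · simp [stepFactor, mul_comm]
    · simp [stepFactor, show hgt l = h by simpa [stepVal] using hlh]
  · rw [if_neg hl, mul_zero, if_neg]
    rintro ⟨hs, hhgt⟩
    rw [isBPrefix_append_singleton_iff] at hs
    rw [hgt_append_singleton] at hhgt
    exact hl ⟨hs.1, by omega⟩

theorem sum_ofFn_succ {M : Type*} [AddCommMonoid M] {α : Type*} [Fintype α] (n : ℕ)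
    (F : List α → M) :
    ∑ g : Fin (n + 1) → α, F (List.ofFn g) = ∑ s : α, ∑ g : Fin n → α, F (List.ofFn g ++ [s]) := by
  rw [← (Fin.snocEquiv fun _ => α).sum_comp, Fintype.sum_prod_type]
  simp only [Fin.snocEquiv_apply, List.ofFn_succ_last, Fin.snoc_castSucc, Fin.snoc_last]

theorem prefixPoly_succ {h : ℤ} (hh : 0 ≤ h) (n : ℕ) :
    prefixPoly (n + 1) h = prefixPoly n (h - 1) + stepFactor .D h * prefixPoly n (h + 1)
      + stepFactor .H h * prefixPoly n h := by
  simp only [prefixPoly, sum_ofFn_succ, prefixWeight_append_singleton hh, ← Finset.mul_sum]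
  rw [show (Finset.univ : Finset Step) = {.U, .D, .H} from rfl, Finset.sum_insert (by decide),
    Finset.sum_insert (by decide), Finset.sum_singleton]
  simp [stepFactor, stepVal, add_assoc]

theorem prefixPoly_of_neg {h : ℤ} (hh : h < 0) (n : ℕ) : prefixPoly n h = 0 :=
  Finset.sum_eq_zero fun g _ => if_neg fun hg => by
    have := hg.1.hgt_nonneg
    omega

theorem prefixPoly_zero (h : ℤ) : prefixPoly 0 h = if h = 0 then 1 else 0 := by
  have : IsBPrefix [] := ⟨fun i _ => by simp [hgt], fun i hi => by simp at hi⟩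
  simp [prefixPoly, prefixWeight, this, hgt, e, eq_comm]

def closedCoeff (n h j : ℕ) : ℕ :=
  if h % 2 = 0 then (n / 2).choose (j + h / 2) * ((n + 1) / 2).choose j
  else (n / 2).choose j * ((n + 1) / 2).choose (j + h / 2 + 1)

noncomputable def closedPoly (n h : ℕ) : ℤ[X] :=
  ∑ j ∈ Finset.range (n / 2 + 1), C (closedCoeff n h j : ℤ) * X ^ j

theorem closedCoeff_eq_zero {n j : ℕ} (hj : n / 2 < j) (h : ℕ) : closedCoeff n h j = 0 := by
  unfold closedCoeff
  split_ifs
  · rw [Nat.choose_eq_zero_of_lt (by omega), zero_mul]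
  · rw [Nat.choose_eq_zero_of_lt hj, zero_mul]

theorem coeff_closedPoly (n h k : ℕ) : (closedPoly n h).coeff k = closedCoeff n h k := by
  simp only [closedPoly, finsetSum_coeff, coeff_C_mul_X_pow, Finset.sum_ite_eq, Finset.mem_range]
  split_ifs with hk
  · rfl
  · rw [closedCoeff_eq_zero (by omega), Nat.cast_zero]

theorem closedPoly_zero (h : ℕ) : closedPoly 0 h = if h = 0 then 1 else 0 := by
  have hcoeff : closedCoeff 0 h 0 = if h = 0 then 1 else 0 := by
    unfold closedCoeff
    split_ifs with heven hzero hzero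
    · simp [hzero]
    · simp [Nat.choose_eq_zero_of_lt (show 0 < h / 2 by omega)]
    · omega
    · simp
  simp [closedPoly, hcoeff]

theorem closedPoly_succ_zero (n : ℕ) :
    closedPoly (n + 1) 0 = closedPoly n 0 + X * closedPoly n 1 := by
  ext (_ | j)
  · simp [coeff_closedPoly, closedCoeff]
  · simp only [coeff_add, coeff_X_mul, coeff_closedPoly, closedCoeff, ↓reduceIte, Nat.reduceMod,
      Nat.reduceDiv, one_ne_zero, add_zero, show (n + 1 + 1) / 2 = n / 2 + 1 by omega,
      Nat.choose_succ_succ, Nat.cast_mul, Nat.cast_add]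
    ring

theorem closedPoly_succ_succ_of_even {k : ℕ} (hk : k % 2 = 0) (n : ℕ) :
    closedPoly (n + 1) (k + 1) = closedPoly n k + closedPoly n (k + 2) := by
  ext j
  simp only [coeff_add, coeff_closedPoly, closedCoeff, hk, show (k + 1) % 2 = 1 by omega,
    Nat.add_mod_right, one_ne_zero, ↓reduceIte, show (k + 1) / 2 = k / 2 by omega,
    show (k + 2) / 2 = k / 2 + 1 by omega, show (n + 1 + 1) / 2 = n / 2 + 1 by omega,
    Nat.choose_succ_succ, Nat.cast_mul, Nat.cast_add, ← add_assoc]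
  ring

theorem closedPoly_succ_succ_of_odd {k : ℕ} (hk : k % 2 = 1) (n : ℕ) :
    closedPoly (n + 1) (k + 1) = closedPoly n k + X * closedPoly n (k + 2) := by
  have hdiv : (k + 1) / 2 = k / 2 + 1 := by omega
  ext (_ | j)
  · simp [coeff_closedPoly, closedCoeff, hk, hdiv, show (k + 1) % 2 = 0 by omega]
  · simp only [coeff_add, coeff_X_mul, coeff_closedPoly, closedCoeff, hk, hdiv,
      show (k + 1) % 2 = 0 by omega, show (k + 2) % 2 = 1 by omega, one_ne_zero, ↓reduceIte,
      show (k + 2) / 2 = k / 2 + 1 by omega, show (n + 1 + 1) / 2 = n / 2 + 1 by omega,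
      Nat.choose_succ_succ, Nat.cast_mul, Nat.cast_add, ← add_assoc]
    rw [add_right_comm j 1]
    ring

theorem prefixPoly_eq_closedPoly (n h : ℕ) : prefixPoly n h = closedPoly n h := by
  induction n generalizing h with
  | zero =>
    simp [prefixPoly_zero, closedPoly_zero]
  | succ n ih =>
    rcases h with _ | k
    · have h0 := ih 0
      have h1 := ih 1
      simp only [Nat.cast_zero, Nat.cast_one] at h0 h1 ⊢
      rw [prefixPoly_succ le_rfl, zero_sub, prefixPoly_of_neg (by norm_num), zero_add, zero_add,
        h0, h1, closedPoly_succ_zero]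
      simp [stepFactor, add_comm]
    · have hk2 := ih (k + 2)
      push_cast at hk2 ⊢
      rw [prefixPoly_succ (by positivity), add_sub_cancel_right, add_assoc (k : ℤ),
        one_add_one_eq_two, ih, hk2]
      have hH : stepFactor .H ((k : ℤ) + 1) = 0 := by
        simp only [stepFactor]
        exact if_neg (by omega)
      rw [hH, zero_mul, add_zero]
      rcases Nat.mod_two_eq_zero_or_one k with hk | hk
      · simp [closedPoly_succ_succ_of_even hk, stepFactor, Nat.odd_iff, hk]
      · simp [closedPoly_succ_succ_of_odd hk, stepFactor, Nat.odd_iff, hk]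

/-- The sum of `t^(e P)` over all B-paths `P` of length `n` equals
`Σ_{j=0}^{⌊n/2⌋} C(⌊n/2⌋,j)·C(⌊(n+1)/2⌋,j)·t^j`, as polynomials in `ℤ[t]`. -/
theorem stmt2 (n : ℕ) :
    ∑ g ∈ Finset.univ.filter (fun g : Fin n → Step => IsBPath (List.ofFn g)),
        (Polynomial.X : Polynomial ℤ) ^ e (List.ofFn g)
      = ∑ j ∈ Finset.range (n / 2 + 1),
          Polynomial.C (((n / 2).choose j * ((n + 1) / 2).choose j : ℕ) : ℤ)
            * Polynomial.X ^ j := by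
  have hpaths : ∑ g ∈ Finset.univ.filter (fun g : Fin n → Step => IsBPath (List.ofFn g)),
      (X : ℤ[X]) ^ e (List.ofFn g) = prefixPoly n 0 := by
    simp only [Finset.sum_filter, prefixPoly, prefixWeight, isBPath_iff]
  rw [hpaths, ← Nat.cast_zero, prefixPoly_eq_closedPoly]
  simp [closedPoly, closedCoeff]
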